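/- Let x : [0,∞) → ℝ be continuous, π = (t_j) a partition of [0,∞) (finite on compacts), and f the difference of two convex functions with left-derivative f'_- and second derivative measure f''. Define the discrete local time L^π_t(u) := 2 Σ_{t_j ∈ π} 1_{⟦x_{t_j∧t}, x_{t_{j+1}∧t}⟧}(u) · |x_{t_{j+1}∧t} − u|, where ⟦u,v⟧ denotes [u,v) if u ≤ v and [v,u) if u > v. Then for all t ≥ 0: f(x_t) − f(x_0) = Σ_{t_j ∈ π} f'_-(x_{t_j})(x_{t_{j+1}∧t} − x_{t_j∧t}) + (1/2) ∫_ℝ L^π_t(u) f''(du). -/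

import Mathlib

open Filter Set MeasureTheory

/-- A partition of `[0,∞)`: an increasing sequence of times starting at `0` and
tending to `∞` (so it is finite on compacts). -/
def IsPartitionInf (π : ℕ → ℝ) : Prop :=
  π 0 = 0 ∧ StrictMono π ∧ Tendsto π atTop atTop

/-- The discrete local time
`L^π_t(u) := 2 Σ_j 1_{⟦x_{t_j∧t}, x_{t_{j+1}∧t}⟧}(u) · |x_{t_{j+1}∧t} − u|`,
where `⟦u,v⟧ = [u∧v, u∨v)`. -/
noncomputable def Ldisc (x : ℝ → ℝ) (π : ℕ → ℝ) (t u : ℝ) : ℝ :=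
  2 * ∑' j : ℕ,
    (Set.Ico (min (x (min (π j) t)) (x (min (π (j + 1)) t)))
             (max (x (min (π j) t)) (x (min (π (j + 1)) t)))).indicator
      (fun v => |x (min (π (j + 1)) t) - v|) u

/-!
Each step of the discrete scheme contributes exactly a first-order Taylor remainder: if `g` is
convex with left derivative `g'` and `ν [c, d) = g' d - g' c`, then
`∫ 1_{⟦a,b⟦}(u) |b - u| ν(du) = g b - g a - g' a (b - a)`.
For `a ≤ b` this is the layer-cake formula `∫_{[a,b)} (b - u) dν = ∫_a^b ν [a, s) ds`
followed by the fundamental theorem of calculus for left derivatives; the case `b < a`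
reduces to it by writing `u - b = (a - b) - (a - u)`. Past the first partition point beyond `t`
all increments vanish, so the sums are finite and telescope to `g (x t) - g (x 0)`.
-/

lemma ConvexOn.monotone_of_hasDerivWithinAt_Iio {g g' : ℝ → ℝ} (hg : ConvexOn ℝ univ g)
    (hg' : ∀ y, HasDerivWithinAt g (g' y) (Iio y) y) : Monotone g' := by
  have : g' = fun y ↦ derivWithin g (Iio y) y :=
    funext fun y ↦ ((hg' y).derivWithin (uniqueDiffWithinAt_Iio y)).symm
  rw [this, ← monotoneOn_univ, ← interior_univ]
  exact hg.monotoneOn_leftDeriv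

theorem intervalIntegral.integral_eq_sub_of_hasDeriv_left_of_le {g g' : ℝ → ℝ} {a b : ℝ}
    (hab : a ≤ b) (hcont : ContinuousOn g (Icc a b))
    (hderiv : ∀ y ∈ Ioo a b, HasDerivWithinAt g (g' y) (Iio y) y)
    (hint : IntervalIntegrable g' volume a b) :
    ∫ y in a..b, g' y = g b - g a := by
  -- `y ↦ -g (-y)` has right derivative `g' (-y)`, so the right-derivative FTC applies to it.
  have hreflect : ∫ y in -b..-a, g' (-y) = -g (-(-a)) - -g (-(-b)) := by
    refine integral_eq_sub_of_hasDeriv_right_of_le (neg_le_neg hab)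
      (hcont.comp continuous_neg.continuousOn fun y hy ↦ ?_).neg (fun y hy ↦ ?_) ?_
    · exact ⟨le_neg.1 hy.2, neg_le.1 hy.1⟩
    · have hmaps : MapsTo Neg.neg (Ioi y) (Iio (-y)) := fun _ hz ↦ mem_Iio.2 (neg_lt_neg hz)
      have := ((hderiv (-y) ⟨lt_neg.1 hy.2, neg_lt.1 hy.1⟩).comp y
        (hasDerivAt_neg y).hasDerivWithinAt hmaps).neg
      simpa using this
    · simpa using ((IntervalIntegrable.iff_comp_neg (by simp)).1 hint).symm
  rw [integral_comp_neg, neg_neg, neg_neg] at hreflect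
  simpa [sub_eq_add_neg, add_comm] using hreflect

theorem ConvexOn.integral_eq_sub_of_hasDerivWithinAt_Iio {g g' : ℝ → ℝ}
    (hg : ConvexOn ℝ univ g) (hg' : ∀ y, HasDerivWithinAt g (g' y) (Iio y) y) {a b : ℝ}
    (hab : a ≤ b) :
    ∫ y in a..b, g' y = g b - g a :=
  intervalIntegral.integral_eq_sub_of_hasDeriv_left_of_le hab
    (hg.continuousOn isOpen_univ |>.mono (subset_univ _)) (fun y _ ↦ hg' y)
    ((hg.monotone_of_hasDerivWithinAt_Iio hg').intervalIntegrable)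

lemma isFiniteMeasureOnCompacts_of_measure_Ico_ne_top {ν : Measure ℝ}
    (hν : ∀ c d, c ≤ d → ν (Ico c d) ≠ ⊤) : IsFiniteMeasureOnCompacts ν := by
  refine ⟨fun K hK ↦ ?_⟩
  obtain ⟨c, hc⟩ := hK.bddBelow
  obtain ⟨d, hd⟩ := hK.bddAbove
  have hsub : K ⊆ Ico c (max c d + 1) := fun y hy ↦
    ⟨hc hy, (hd hy).trans_lt ((le_max_right c d).trans_lt (lt_add_one _))⟩
  exact (measure_mono hsub).trans_lt
    (hν _ _ ((le_max_left c d).trans (le_add_of_nonneg_right zero_le_one))).lt_top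

theorem integral_Ico_sub_eq_integral_measureReal_Ico {ν : Measure ℝ}
    [IsFiniteMeasureOnCompacts ν] {a b : ℝ} (hab : a ≤ b) :
    ∫ u in Ico a b, (b - u) ∂ν = ∫ s in a..b, ν.real (Ico a s) := by
  have hint : Integrable (fun u ↦ b - u) (ν.restrict (Ico a b)) :=
    (continuous_const.sub continuous_id).integrableOn_Icc.mono_set Ico_subset_Icc_self
  have hnn : 0 ≤ᵐ[ν.restrict (Ico a b)] fun u ↦ b - u :=
    (ae_restrict_iff' measurableSet_Ico).2 (.of_forall fun u hu ↦ sub_nonneg.2 hu.2.le)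
  have hlevel : ∀ t ∈ Icc 0 (b - a),
      (ν.restrict (Ico a b)).real {u | t < b - u} = ν.real (Ico a (b - t)) := by
    intro t ht
    rw [measureReal_restrict_apply' measurableSet_Ico]
    congr 1
    ext u
    simp only [mem_inter_iff, mem_ofPred_eq, mem_Ico]
    constructor <;> intro <;> refine ⟨?_, ?_⟩ <;> grind
  have hvanish : ∀ t ∈ Ioi 0 \ Ioc 0 (b - a),
      (ν.restrict (Ico a b)).real {u | t < b - u} = 0 := by
    intro t ht
    have : {u | t < b - u} ∩ Ico a b = ∅ := by
      ext u
      simp only [mem_inter_iff, mem_ofPred_eq, mem_Ico, mem_empty_iff_false, iff_false]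
      grind
    rw [measureReal_restrict_apply' measurableSet_Ico, this, measureReal_empty]
  rw [hint.integral_eq_integral_meas_lt hnn,
    setIntegral_eq_of_subset_of_forall_sdiff_eq_zero measurableSet_Ioi Ioc_subset_Ioi_self hvanish,
    ← intervalIntegral.integral_of_le (sub_nonneg.2 hab),
    intervalIntegral.integral_congr (g := fun t ↦ ν.real (Ico a (b - t))) fun t ht ↦ hlevel t
      (by rwa [uIcc_of_le (sub_nonneg.2 hab)] at ht),
    intervalIntegral.integral_comp_sub_left (fun s ↦ ν.real (Ico a s))]
  simp

section Convex

variable {g g' : ℝ → ℝ} {ν : Measure ℝ}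

lemma measureReal_Ico_of_eq_ofReal (hmono : Monotone g')
    (hν : ∀ c d, c ≤ d → ν (Ico c d) = ENNReal.ofReal (g' d - g' c)) {c d : ℝ}
    (hcd : c ≤ d) :
    ν.real (Ico c d) = g' d - g' c := by
  rw [measureReal_def, hν c d hcd, ENNReal.toReal_ofReal (sub_nonneg.2 (hmono hcd))]

lemma isFiniteMeasureOnCompacts_of_measure_Ico_eq_ofReal
    (hν : ∀ c d, c ≤ d → ν (Ico c d) = ENNReal.ofReal (g' d - g' c)) :
    IsFiniteMeasureOnCompacts ν :=
  isFiniteMeasureOnCompacts_of_measure_Ico_ne_top fun c d hcd ↦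
    hν c d hcd ▸ ENNReal.ofReal_ne_top

variable (hg : ConvexOn ℝ univ g) (hg' : ∀ y, HasDerivWithinAt g (g' y) (Iio y) y)
  (hν : ∀ c d, c ≤ d → ν (Ico c d) = ENNReal.ofReal (g' d - g' c))
include hg hg' hν

theorem ConvexOn.integral_Ico_right_sub_eq {a b : ℝ} (hab : a ≤ b) :
    ∫ u in Ico a b, (b - u) ∂ν = g b - g a - g' a * (b - a) := by
  have hmono := hg.monotone_of_hasDerivWithinAt_Iio hg'
  have := isFiniteMeasureOnCompacts_of_measure_Ico_eq_ofReal hν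
  calc ∫ u in Ico a b, (b - u) ∂ν = ∫ s in a..b, ν.real (Ico a s) :=
        integral_Ico_sub_eq_integral_measureReal_Ico hab
    _ = ∫ s in a..b, (g' s - g' a) := intervalIntegral.integral_congr fun s hs ↦
        measureReal_Ico_of_eq_ofReal hmono hν (by rw [uIcc_of_le hab] at hs; exact hs.1)
    _ = g b - g a - g' a * (b - a) := by
        rw [intervalIntegral.integral_sub hmono.intervalIntegrable intervalIntegrable_const,
          hg.integral_eq_sub_of_hasDerivWithinAt_Iio hg' hab, intervalIntegral.integral_const,
          smul_eq_mul]
        ring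

theorem ConvexOn.integral_Ico_sub_left_eq {a b : ℝ} (hba : b ≤ a) :
    ∫ u in Ico b a, (u - b) ∂ν = g b - g a - g' a * (b - a) := by
  have := isFiniteMeasureOnCompacts_of_measure_Ico_eq_ofReal hν
  calc ∫ u in Ico b a, (u - b) ∂ν = ∫ u in Ico b a, ((a - b) - (a - u)) ∂ν := by
        simp only [sub_sub_sub_cancel_left]
    _ = ν.real (Ico b a) * (a - b) - ∫ u in Ico b a, (a - u) ∂ν := by
        have hconst : IntegrableOn (fun _ ↦ a - b) (Ico b a) ν :=
          continuous_const.integrableOn_Icc.mono_set Ico_subset_Icc_self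
        have hlin : IntegrableOn (fun u ↦ a - u) (Ico b a) ν :=
          (continuous_const.sub continuous_id).integrableOn_Icc.mono_set Ico_subset_Icc_self
        rw [integral_sub hconst hlin, setIntegral_const, smul_eq_mul]
    _ = g b - g a - g' a * (b - a) := by
        rw [measureReal_Ico_of_eq_ofReal (hg.monotone_of_hasDerivWithinAt_Iio hg') hν hba,
          hg.integral_Ico_right_sub_eq hg' hν hba]
        ring

theorem ConvexOn.integral_indicator_Ico_abs_sub (a b : ℝ) :
    ∫ u, (Ico (min a b) (max a b)).indicator (fun v ↦ |b - v|) u ∂ν =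
      g b - g a - g' a * (b - a) := by
  rw [integral_indicator measurableSet_Ico]
  rcases le_total a b with hab | hba
  · rw [min_eq_left hab, max_eq_right hab, setIntegral_congr_fun measurableSet_Ico
      fun u hu ↦ abs_of_nonneg (sub_nonneg.2 hu.2.le)]
    exact hg.integral_Ico_right_sub_eq hg' hν hab
  · rw [min_eq_right hba, max_eq_left hba, setIntegral_congr_fun measurableSet_Ico
      fun u hu ↦ abs_sub_comm b u ▸ abs_of_nonneg (sub_nonneg.2 hu.1)]
    exact hg.integral_Ico_sub_left_eq hg' hν hba

end Convex

section Partition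

variable {x : ℝ → ℝ} {π : ℕ → ℝ} {t : ℝ} {N : ℕ}

lemma IsPartitionInf.eventually_min_eq (hπ : IsPartitionInf π) (t : ℝ) :
    ∀ᶠ j in atTop, min (π j) t = t :=
  (hπ.2.2.eventually_ge_atTop t).mono fun _ ↦ min_eq_right

lemma tsum_stopped_eq_sum (hN : ∀ j ≥ N, min (π j) t = t) (F : ℕ → ℝ → ℝ → ℝ)
    (hF : ∀ j c, F j c c = 0) :
    ∑' j, F j (x (min (π j) t)) (x (min (π (j + 1)) t)) =
      ∑ j ∈ Finset.range N, F j (x (min (π j) t)) (x (min (π (j + 1)) t)) :=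
  tsum_eq_sum fun j hj ↦ by
    have hNj : N ≤ j := by simpa using hj
    rw [hN j hNj, hN (j + 1) (hNj.trans j.le_succ), hF]

lemma mul_stopped_increment (hπ : Monotone π) (f : ℝ → ℝ) (j : ℕ) :
    f (x (π j)) * (x (min (π (j + 1)) t) - x (min (π j) t)) =
      f (x (min (π j) t)) * (x (min (π (j + 1)) t) - x (min (π j) t)) := by
  rcases le_total (π j) t with hj | hj
  · rw [min_eq_left hj]
  · rw [min_eq_right hj, min_eq_right (hj.trans (hπ j.le_succ)), sub_self, mul_zero, mul_zero]

lemma integral_Ldisc_eq_sum {ν : Measure ℝ} [IsFiniteMeasureOnCompacts ν]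
    (hN : ∀ j ≥ N, min (π j) t = t) :
    ∫ u, Ldisc x π t u ∂ν = 2 * ∑ j ∈ Finset.range N,
      ∫ u, (Ico (min (x (min (π j) t)) (x (min (π (j + 1)) t)))
        (max (x (min (π j) t)) (x (min (π (j + 1)) t)))).indicator
          (fun v ↦ |x (min (π (j + 1)) t) - v|) u ∂ν := by
  have hsum : ∀ u, Ldisc x π t u = 2 * ∑ j ∈ Finset.range N,
      (Ico (min (x (min (π j) t)) (x (min (π (j + 1)) t)))
        (max (x (min (π j) t)) (x (min (π (j + 1)) t)))).indicator
          (fun v ↦ |x (min (π (j + 1)) t) - v|) u := fun u ↦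
    congrArg (2 * ·) <| tsum_stopped_eq_sum hN
      (fun _ c d ↦ (Ico (min c d) (max c d)).indicator (fun v ↦ |d - v|) u) (by simp)
  simp_rw [hsum]
  rw [integral_const_mul, integral_finsetSum _ fun j _ ↦ (integrable_indicator_iff
    measurableSet_Ico).2 <| (continuous_const.sub continuous_id).abs.integrableOn_Icc.mono_set
      Ico_subset_Icc_self]

theorem ConvexOn.discrete_tanaka_meyer {g g' : ℝ → ℝ} {ν : Measure ℝ}
    (hg : ConvexOn ℝ univ g) (hg' : ∀ y, HasDerivWithinAt g (g' y) (Iio y) y)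
    (hν : ∀ c d, c ≤ d → ν (Ico c d) = ENNReal.ofReal (g' d - g' c))
    (hπ0 : π 0 = 0) (hπ : Monotone π) (hN : ∀ j ≥ N, min (π j) t = t) (ht : 0 ≤ t) :
    g (x t) - g (x 0) =
      ∑ j ∈ Finset.range N, g' (x (π j)) * (x (min (π (j + 1)) t) - x (min (π j) t)) +
        1 / 2 * ∫ u, Ldisc x π t u ∂ν := by
  have := isFiniteMeasureOnCompacts_of_measure_Ico_eq_ofReal hν
  rw [integral_Ldisc_eq_sum hN, one_div, inv_mul_cancel_left₀ two_ne_zero,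
    ← Finset.sum_add_distrib]
  simp_rw [mul_stopped_increment hπ g', hg.integral_indicator_Ico_abs_sub hg' hν,
    add_sub_cancel]
  rw [Finset.sum_range_sub (fun j ↦ g (x (min (π j) t))), hN N le_rfl, hπ0, min_eq_left ht]

end Partition

/-- **Discrete Tanaka–Meyer formula.** For continuous `x`, a partition `π` of `[0,∞)`,
and `f = g − h` a difference of convex functions with left derivatives `g', h'` and second
derivative measures `νg, νh`:
`f(x_t) − f(x_0) = Σ_j f'_-(x_{t_j})(x_{t_{j+1}∧t} − x_{t_j∧t}) + (1/2)∫ L^π_t(u) f''(du)`. -/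
theorem discrete_tanaka_meyer
    (x : ℝ → ℝ) (π : ℕ → ℝ) (g h g' h' : ℝ → ℝ) (νg νh : Measure ℝ)
    (hπ : IsPartitionInf π)
    (hg : ConvexOn ℝ Set.univ g) (hh : ConvexOn ℝ Set.univ h)
    (hg' : ∀ y : ℝ, HasDerivWithinAt g (g' y) (Set.Iio y) y)
    (hh' : ∀ y : ℝ, HasDerivWithinAt h (h' y) (Set.Iio y) y)
    (hνg : ∀ c d : ℝ, c ≤ d → νg (Set.Ico c d) = ENNReal.ofReal (g' d - g' c))
    (hνh : ∀ c d : ℝ, c ≤ d → νh (Set.Ico c d) = ENNReal.ofReal (h' d - h' c)) :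
    ∀ t : ℝ, 0 ≤ t →
      (g (x t) - h (x t)) - (g (x 0) - h (x 0)) =
        (∑' j : ℕ, (g' (x (π j)) - h' (x (π j))) *
          (x (min (π (j + 1)) t) - x (min (π j) t))) +
        (1 / 2) * ((∫ u, Ldisc x π t u ∂νg) - (∫ u, Ldisc x π t u ∂νh)) := by
  intro t ht
  obtain ⟨N, hN⟩ := eventually_atTop.1 (hπ.eventually_min_eq t)
  have hsum := tsum_stopped_eq_sum (x := x) hN
    (fun j c d ↦ (g' (x (π j)) - h' (x (π j))) * (d - c)) (by simp)
  beta_reduce at hsum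
  rw [hsum]
  simp only [sub_mul, Finset.sum_sub_distrib]
  linarith [hg.discrete_tanaka_meyer (x := x) hg' hνg hπ.1 hπ.2.1.monotone hN ht,
    hh.discrete_tanaka_meyer (x := x) hh' hνh hπ.1 hπ.2.1.monotone hN ht]
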